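/- The pair of functions b_{++}(x,t) = -π e^{-2it}/cos(2x) and B_{--}(x,t) = e^{2it}/(π cos(2x)) satisfies the separated nonlinear Schrödinger system 2i ∂_t b_{++} = -∂_x² b_{++} - 8 b_{++}² B_{--} and 2i ∂_t B_{--} = ∂_x² B_{--} + 8 b_{++} B_{--}², at every point (x,t) with cos(2x) ≠ 0. -/

import Mathlib

open Complex

/-- The special periodic solution `b₊₊(x,t) = -π e^{-2it}/cos(2x)`. -/
noncomputable def bpp (x t : ℝ) : ℂ :=
  -(Real.pi : ℂ) * Complex.exp (-2 * I * t) / Complex.cos (2 * x)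

/-- The special periodic solution `B₋₋(x,t) = e^{2it}/(π cos(2x))`. -/
noncomputable def Bmm (x t : ℝ) : ℂ :=
  Complex.exp (2 * I * t) / ((Real.pi : ℂ) * Complex.cos (2 * x))


/-!
Both functions have the form `c(t) / cos (2x)` with `c(t)` proportional to `e^{∓2it}`, so `∂ₜ` acts
on them as multiplication by `∓2i` and `∂ₓ²` as multiplication by `8 / cos² (2x) - 4`. Since
`b₊₊ B₋₋ = -1 / cos² (2x)`, the cubic terms `8 b₊₊² B₋₋` and `8 b₊₊ B₋₋²` cancel exactly the
`8 / cos² (2x)` parts, leaving `4 b₊₊ = 2i ∂ₜ b₊₊` and `-4 B₋₋ = 2i ∂ₜ B₋₋`.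
-/

open Topology

lemma hasDerivAt_cexp_mul_ofReal (a : ℂ) (t : ℝ) :
    HasDerivAt (fun s : ℝ => exp (a * s)) (a * exp (a * t)) t := by
  simpa [mul_comm] using ((hasDerivAt_id t).ofReal_comp.const_mul a).cexp

lemma hasDerivAt_cos_two_mul_ofReal (x : ℝ) :
    HasDerivAt (fun y : ℝ => cos (2 * y)) (-2 * sin (2 * x)) x := by
  simpa [mul_comm] using ((hasDerivAt_id (x : ℂ)).const_mul 2).ccos.comp_ofReal

lemma hasDerivAt_sin_two_mul_ofReal (x : ℝ) :
    HasDerivAt (fun y : ℝ => sin (2 * y)) (2 * cos (2 * x)) x := by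
  simpa [mul_comm] using ((hasDerivAt_id (x : ℂ)).const_mul 2).csin.comp_ofReal

lemma hasDerivAt_const_div_cos_two_mul (C : ℂ) {x : ℝ} (hx : cos (2 * x) ≠ 0) :
    HasDerivAt (fun y : ℝ => C / cos (2 * y)) (2 * C * sin (2 * x) / cos (2 * x) ^ 2) x := by
  refine ((hasDerivAt_const x C).fun_div (hasDerivAt_cos_two_mul_ofReal x) hx).congr_deriv ?_
  ring

lemma deriv_deriv_const_div_cos_two_mul (C : ℂ) {x : ℝ} (hx : cos (2 * x) ≠ 0) :
    deriv (deriv fun y : ℝ => C / cos (2 * y)) x = (8 / cos (2 * x) ^ 2 - 4) * (C / cos (2 * x)) := by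
  have hcos_ne : ∀ᶠ y : ℝ in 𝓝 x, cos (2 * y) ≠ 0 :=
    (by fun_prop : Continuous fun y : ℝ => cos (2 * y)).continuousAt.eventually_ne hx
  have hderiv : deriv (fun y : ℝ => C / cos (2 * y))
      =ᶠ[𝓝 x] fun y : ℝ => 2 * C * sin (2 * y) / cos (2 * y) ^ 2 :=
    hcos_ne.mono fun y hy => (hasDerivAt_const_div_cos_two_mul C hy).deriv
  have hsecond := ((hasDerivAt_sin_two_mul_ofReal x).const_mul (2 * C)).fun_div
    ((hasDerivAt_cos_two_mul_ofReal x).fun_pow 2) (pow_ne_zero 2 hx)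
  simp only [Nat.cast_ofNat, Nat.reduceSub, pow_one] at hsecond
  rw [hderiv.deriv_eq, hsecond.deriv]
  field_simp
  linear_combination (8 * C) * sin_sq_add_cos_sq (2 * (x : ℂ))

lemma hasDerivAt_bpp_time (x t : ℝ) : HasDerivAt (fun s => bpp x s) (-2 * I * bpp x t) t := by
  refine (((hasDerivAt_cexp_mul_ofReal (-2 * I) t).const_mul (-(Real.pi : ℂ))).div_const
    (cos (2 * (x : ℂ)))).congr_deriv ?_
  simp only [bpp]
  ring

lemma hasDerivAt_Bmm_time (x t : ℝ) : HasDerivAt (fun s => Bmm x s) (2 * I * Bmm x t) t := by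
  refine ((hasDerivAt_cexp_mul_ofReal (2 * I) t).div_const
    ((Real.pi : ℂ) * cos (2 * (x : ℂ)))).congr_deriv ?_
  simp only [Bmm]
  ring

lemma deriv_deriv_bpp_space {x : ℝ} (t : ℝ) (hx : cos (2 * (x : ℂ)) ≠ 0) :
    deriv (fun x' : ℝ => deriv (fun x'' : ℝ => bpp x'' t) x') x
      = (8 / cos (2 * x) ^ 2 - 4) * bpp x t :=
  deriv_deriv_const_div_cos_two_mul _ hx

lemma deriv_deriv_Bmm_space {x : ℝ} (t : ℝ) (hx : cos (2 * (x : ℂ)) ≠ 0) :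
    deriv (fun x' : ℝ => deriv (fun x'' : ℝ => Bmm x'' t) x') x
      = (8 / cos (2 * x) ^ 2 - 4) * Bmm x t := by
  have hBmm : (fun y : ℝ => Bmm y t) = fun y : ℝ => exp (2 * I * t) / Real.pi / cos (2 * y) := by
    funext y
    exact (div_div _ _ _).symm
  rw [hBmm, deriv_deriv_const_div_cos_two_mul _ hx, div_div]
  rfl

lemma bpp_mul_Bmm (x t : ℝ) : bpp x t * Bmm x t = -1 / cos (2 * x) ^ 2 := by
  have hπ : (Real.pi : ℂ) ≠ 0 := ofReal_ne_zero.mpr Real.pi_ne_zero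
  have hexp : exp (-2 * I * t) * exp (2 * I * t) = 1 := by
    rw [← exp_add, neg_mul, neg_mul, neg_add_cancel, exp_zero]
  rw [bpp, Bmm, div_mul_div_comm, mul_assoc, hexp]
  field_simp

/-- The pair `(bpp, Bmm)` solves the separated NLS system
`2i ∂ₜ b = -∂ₓ² b - 8 b² B` and `2i ∂ₜ B = ∂ₓ² B + 8 b B²`
at every point with `cos(2x) ≠ 0`. -/
theorem stmt_0 (x t : ℝ) (h : Complex.cos (2 * (x : ℂ)) ≠ 0) :
    2 * I * deriv (fun t' : ℝ => bpp x t') t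
      = -(deriv (fun x' : ℝ => deriv (fun x'' : ℝ => bpp x'' t) x') x)
        - 8 * (bpp x t) ^ 2 * Bmm x t ∧
    2 * I * deriv (fun t' : ℝ => Bmm x t') t
      = deriv (fun x' : ℝ => deriv (fun x'' : ℝ => Bmm x'' t) x') x
        + 8 * bpp x t * (Bmm x t) ^ 2 := by
  have hbB := bpp_mul_Bmm x t
  constructor
  · rw [(hasDerivAt_bpp_time x t).deriv, deriv_deriv_bpp_space t h]
    linear_combination (-4 * bpp x t) * I_sq + (8 * bpp x t) * hbB
  · rw [(hasDerivAt_Bmm_time x t).deriv, deriv_deriv_Bmm_space t h]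
    linear_combination (4 * Bmm x t) * I_sq - (8 * Bmm x t) * hbB
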